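/- If U is an n×n unitary matrix, then the real part Re(U) and the imaginary part Im(U) admit simultaneous real singular value decompositions: there exist real orthogonal matrices O₁, O₂ and diagonal matrices C = diag(cos θ_l), S = diag(sin θ_l) such that Re(U) = O₁ C O₂ and Im(U) = O₁ S O₂. -/

import Mathlib

/-!
`S = U Uᵀ` is a symmetric unitary, so its real and imaginary parts `X`, `Y` are real symmetric,
and the imaginary part of `Sᴴ S = 1` reads `X Y = Y X`. A simultaneous real orthogonal
diagonalisation `X = O₁ diag(d) O₁ᵀ`, `Y = O₁ diag(e) O₁ᵀ` gives `S = O₁ diag(z) O₁ᵀ` with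
`|z_l| = 1`, i.e. `S = O₁ D² O₁ᵀ` for a diagonal unitary `D = diag(e^{iθ_l})`.
Then `O₂ := D⁻¹ O₁ᵀ U` is unitary, and `Uᵀ = Uᴴ S` gives `O₂ᵀ = O₂ᴴ`, so `O₂` is real.
Taking real and imaginary parts of `U = O₁ D O₂` gives the two decompositions.
-/

open Matrix Module Module.End

namespace LinearMap.IsSymmetric

variable {𝕜 E : Type*} [RCLike 𝕜] [NormedAddCommGroup E] [InnerProductSpace 𝕜 E]
  [FiniteDimensional 𝕜 E] {A B : E →ₗ[𝕜] E}

theorem exists_orthonormalBasis_eigenvectors_of_commute {ι : Type*} [Fintype ι]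
    (hA : A.IsSymmetric) (hB : B.IsSymmetric) (hAB : Commute A B)
    (hι : finrank 𝕜 E = Fintype.card ι) :
    ∃ (b : OrthonormalBasis ι 𝕜 E) (d e : ι → 𝕜),
      ∀ j, A (b j) = d j • b j ∧ B (b j) = e j • b j := by
  let V : 𝕜 × 𝕜 → Submodule 𝕜 E := fun p => eigenspace A p.2 ⊓ eigenspace B p.1
  -- A subordinate orthonormal basis needs a finite index set: keep the nonzero joint eigenspaces.
  have : Finite {p // V p ≠ ⊥} := Set.Finite.to_subtype <|
    (Module.End.finite_hasEigenvalue B |>.prod (Module.End.finite_hasEigenvalue A)).subset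
      fun p hp => ⟨fun h => hp (by simp [V, h]), fun h => hp (by simp [V, h])⟩
  have : Fintype {p // V p ≠ ⊥} := Fintype.ofFinite _
  have hV : DirectSum.IsInternal fun p : {p // V p ≠ ⊥} => V p :=
    DirectSum.isInternal_ne_bot_iff.2 (directSum_isInternal_of_commute hA hB hAB)
  have hV' : OrthogonalFamily 𝕜 (fun p : {p // V p ≠ ⊥} => V p) fun p => (V p).subtypeₗᵢ :=
    (orthogonalFamily_eigenspace_inf_eigenspace hA hB).comp Subtype.val_injective
  let σ := (Fintype.equivFinOfCardEq hι.symm).symm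
  let p : ι → 𝕜 × 𝕜 := fun j => (hV.subordinateOrthonormalBasisIndex rfl (σ.symm j) hV').1
  refine ⟨(hV.subordinateOrthonormalBasis rfl hV').reindex σ, fun j => (p j).2,
    fun j => (p j).1, fun j => ?_⟩
  have hmem := hV.subordinateOrthonormalBasis_subordinate rfl (σ.symm j) hV'
  rw [OrthonormalBasis.reindex_apply]
  exact ⟨mem_eigenspace_iff.1 hmem.1, mem_eigenspace_iff.1 hmem.2⟩

end LinearMap.IsSymmetric

namespace Matrix

open Complex

section ReIm

variable {l m n : Type*}

lemma ext_re_im {M N : Matrix m n ℂ} (hre : M.map re = N.map re) (him : M.map im = N.map im) :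
    M = N :=
  ext fun i j => Complex.ext (congr_fun₂ hre i j) (congr_fun₂ him i j)

lemma map_ofReal_re (M : Matrix m n ℝ) : (M.map ofReal).map re = M := by ext; simp

lemma map_ofReal_im (M : Matrix m n ℝ) : (M.map ofReal).map im = 0 := by ext; simp

lemma conjTranspose_map_re (M : Matrix m n ℂ) : Mᴴ.map re = (M.map re)ᵀ := by ext; simp

lemma conjTranspose_map_im (M : Matrix m n ℂ) : Mᴴ.map im = -(M.map im)ᵀ := by ext; simp

lemma conjTranspose_map_ofReal (M : Matrix m n ℝ) : (M.map ofReal)ᴴ = Mᵀ.map ofReal := by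
  ext; simp

lemma map_re_map_ofReal_of_conjTranspose_eq_transpose {M : Matrix n n ℂ} (h : Mᴴ = Mᵀ) :
    (M.map re).map ofReal = M := by
  ext i j
  exact conj_eq_iff_re.1 (congr_fun₂ h j i)

lemma one_map_im [DecidableEq n] : (1 : Matrix n n ℂ).map im = 0 := by
  ext i j
  by_cases h : i = j <;> simp [h]

variable [Fintype m]

lemma map_ofReal_mul (M : Matrix l m ℝ) (N : Matrix m n ℝ) :
    (M * N).map ofReal = M.map ofReal * N.map ofReal :=
  Matrix.map_mul (f := ofRealHom)

lemma mul_map_re (M : Matrix l m ℂ) (N : Matrix m n ℂ) :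
    (M * N).map re = M.map re * N.map re - M.map im * N.map im := by
  ext; simp [mul_apply, Complex.re_sum, Finset.sum_sub_distrib]

lemma mul_map_im (M : Matrix l m ℂ) (N : Matrix m n ℂ) :
    (M * N).map im = M.map re * N.map im + M.map im * N.map re := by
  ext; simp [mul_apply, Complex.im_sum, Finset.sum_add_distrib]

end ReIm

section PhaseDiagonal

variable {n : Type*} [DecidableEq n]

/-- The diagonal unitary `D = C + iS` of the decomposition `U = O₁ D O₂`. -/
noncomputable def phaseDiagonal (θ : n → ℝ) : Matrix n n ℂ := diagonal fun l => exp (θ l * I)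

variable (θ : n → ℝ)

lemma phaseDiagonal_map_re : (phaseDiagonal θ).map re = diagonal fun l => Real.cos (θ l) := by
  simp [phaseDiagonal, diagonal_map, exp_ofReal_mul_I_re]

lemma phaseDiagonal_map_im : (phaseDiagonal θ).map im = diagonal fun l => Real.sin (θ l) := by
  simp [phaseDiagonal, diagonal_map, exp_ofReal_mul_I_im]

lemma transpose_phaseDiagonal : (phaseDiagonal θ)ᵀ = phaseDiagonal θ :=
  diagonal_transpose _

lemma conjTranspose_phaseDiagonal : (phaseDiagonal θ)ᴴ = phaseDiagonal (-θ) := by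
  simp [phaseDiagonal, diagonal_conjTranspose, ← Complex.exp_conj]

end PhaseDiagonal

section Unitary

variable {n : Type*} [Fintype n] [DecidableEq n]

theorem star_mul_mul_eq_diagonal_of_mulVec_col {R : Type*} [CommRing R] [StarRing R]
    {O A : Matrix n n R} (hO : O ∈ unitaryGroup n R) {d : n → R}
    (hd : ∀ j, A *ᵥ O.col j = d j • O.col j) : star O * A * O = diagonal d := by
  have hAO : A * O = O * diagonal d := by
    ext i j
    rw [mul_diagonal]
    simpa [mul_apply, mulVec, dotProduct, mul_comm] using congrFun (hd j) i
  rw [Matrix.mul_assoc, hAO, ← Matrix.mul_assoc, mem_unitaryGroup_iff'.1 hO, Matrix.one_mul]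

theorem IsHermitian.exists_unitary_diagonal_of_commute {𝕜 : Type*} [RCLike 𝕜]
    {A B : Matrix n n 𝕜} (hA : A.IsHermitian) (hB : B.IsHermitian) (hAB : Commute A B) :
    ∃ O ∈ unitaryGroup n 𝕜, ∃ d e : n → 𝕜,
      star O * A * O = diagonal d ∧ star O * B * O = diagonal e := by
  obtain ⟨b, d, e, hbde⟩ :=
    (isSymmetric_toEuclideanLin_iff.2 hA).exists_orthonormalBasis_eigenvectors_of_commute
      (isSymmetric_toEuclideanLin_iff.2 hB) (hAB.map (toLpLinAlgEquiv 2)) finrank_euclideanSpace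
  let O := (EuclideanSpace.basisFun n 𝕜).toBasis.toMatrix b.toBasis
  have hO : O ∈ unitaryGroup n 𝕜 :=
    (EuclideanSpace.basisFun n 𝕜).toMatrix_orthonormalBasis_mem_unitary b
  have hcol : ∀ j, O.col j = b j := fun j => rfl
  refine ⟨O, hO, d, e, star_mul_mul_eq_diagonal_of_mulVec_col hO fun j => ?_,
    star_mul_mul_eq_diagonal_of_mulVec_col hO fun j => ?_⟩
  · simpa [hcol, toLpLin_apply] using congr(WithLp.ofLp $((hbde j).1))
  · simpa [hcol, toLpLin_apply] using congr(WithLp.ofLp $((hbde j).2))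

lemma diagonal_mem_unitaryGroup_iff {α : Type*} [CommRing α] [StarRing α] {z : n → α} :
    diagonal z ∈ unitaryGroup n α ↔ ∀ i, z i ∈ unitary α := by
  simp [mem_unitaryGroup_iff', star_eq_conjTranspose, diagonal_conjTranspose, ← diagonal_one,
    Unitary.mem_iff_star_mul_self]

lemma map_ofReal_mem_unitaryGroup_iff {M : Matrix n n ℝ} :
    M.map ofReal ∈ unitaryGroup n ℂ ↔ M ∈ orthogonalGroup n ℝ := by
  rw [mem_unitaryGroup_iff', mem_unitaryGroup_iff', star_eq_conjTranspose, star_eq_conjTranspose,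
    conjTranspose_map_ofReal, conjTranspose_eq_transpose_of_trivial,
    ← (map_injective ofReal_injective).eq_iff, map_ofReal_mul,
    Matrix.map_one _ ofReal_zero ofReal_one]

lemma map_ofReal_mul_map_ofReal_transpose {O : Matrix n n ℝ} (hO : O ∈ orthogonalGroup n ℝ) :
    O.map ofReal * Oᵀ.map ofReal = 1 := by
  rw [← map_ofReal_mul, (mem_orthogonalGroup_iff n ℝ).1 hO,
    Matrix.map_one _ ofReal_zero ofReal_one]

lemma map_ofReal_transpose_mul_map_ofReal {O : Matrix n n ℝ} (hO : O ∈ orthogonalGroup n ℝ) :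
    Oᵀ.map ofReal * O.map ofReal = 1 := by
  rw [← map_ofReal_mul, (mem_orthogonalGroup_iff' n ℝ).1 hO,
    Matrix.map_one _ ofReal_zero ofReal_one]

lemma phaseDiagonal_mem_unitaryGroup (θ : n → ℝ) : phaseDiagonal θ ∈ unitaryGroup n ℂ :=
  diagonal_mem_unitaryGroup_iff.2 fun l => by
    rw [Unitary.mem_iff_star_mul_self, star_def, ← Complex.exp_conj, ← Complex.exp_add]
    simp

lemma phaseDiagonal_mul_phaseDiagonal_neg (θ : n → ℝ) :
    phaseDiagonal θ * phaseDiagonal (-θ) = 1 := by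
  simp [phaseDiagonal, diagonal_mul_diagonal, ← Complex.exp_add]

lemma phaseDiagonal_half_mul_self (θ : n → ℝ) :
    phaseDiagonal (θ / 2) * phaseDiagonal (θ / 2) = phaseDiagonal θ := by
  simp only [phaseDiagonal, diagonal_mul_diagonal, ← exp_add, Pi.div_apply, Pi.ofNat_apply]
  congr! 3
  push_cast
  ring

theorem exists_orthogonal_phaseDiagonal_of_transpose_eq {S : Matrix n n ℂ}
    (hS : S ∈ unitaryGroup n ℂ) (hSt : Sᵀ = S) :
    ∃ O ∈ orthogonalGroup n ℝ, ∃ φ : n → ℝ,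
      S = O.map ofReal * phaseDiagonal φ * Oᵀ.map ofReal := by
  set X := S.map re with hXdef
  set Y := S.map im with hYdef
  have hX : Xᵀ = X := by rw [← transpose_map, hSt]
  have hY : Yᵀ = Y := by rw [← transpose_map, hSt]
  have hXY : Commute X Y := by
    have h := congrArg (map · im) (mem_unitaryGroup_iff'.1 hS)
    simp only [star_eq_conjTranspose, mul_map_im, conjTranspose_map_re, conjTranspose_map_im,
      one_map_im, ← hXdef, ← hYdef, hX, hY] at h
    rwa [neg_mul, add_neg_eq_zero] at h
  have hXh : X.IsHermitian := (conjTranspose_eq_transpose_of_trivial X).trans hX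
  have hYh : Y.IsHermitian := (conjTranspose_eq_transpose_of_trivial Y).trans hY
  obtain ⟨O, hO, d, e, hd, he⟩ := hXh.exists_unitary_diagonal_of_commute hYh hXY
  rw [star_eq_conjTranspose, conjTranspose_eq_transpose_of_trivial] at hd he
  set z : n → ℂ := fun l => ⟨d l, e l⟩
  have hz : Oᵀ.map ofReal * S * O.map ofReal = diagonal z := by
    apply ext_re_im
    · simp only [mul_map_re, mul_map_im, map_ofReal_re, map_ofReal_im, Matrix.zero_mul,
        Matrix.mul_zero, sub_zero, ← hXdef, hd, diagonal_map zero_re]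
      rfl
    · simp only [mul_map_re, mul_map_im, map_ofReal_re, map_ofReal_im, Matrix.zero_mul,
        Matrix.mul_zero, add_zero, zero_add, ← hYdef, he, diagonal_map zero_im]
      rfl
  have hzU : ∀ l, z l ∈ unitary ℂ := by
    rw [← diagonal_mem_unitaryGroup_iff, ← hz]
    exact mul_mem (mul_mem (map_ofReal_mem_unitaryGroup_iff.2
      (transpose_mem_unitaryGroup_iff.2 hO)) hS) (map_ofReal_mem_unitaryGroup_iff.2 hO)
  have hphase : phaseDiagonal (fun l => arg (z l)) = diagonal z :=
    congrArg diagonal <| funext fun l => by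
      simpa [CStarRing.norm_of_mem_unitary (hzU l)] using norm_mul_exp_arg_mul_I (z l)
  refine ⟨O, hO, fun l => arg (z l), ?_⟩
  calc S = (O.map ofReal * Oᵀ.map ofReal) * S * (O.map ofReal * Oᵀ.map ofReal) := by
        rw [map_ofReal_mul_map_ofReal_transpose hO, Matrix.one_mul, Matrix.mul_one]
    _ = O.map ofReal * (Oᵀ.map ofReal * S * O.map ofReal) * Oᵀ.map ofReal := by
        simp only [Matrix.mul_assoc]
    _ = _ := by rw [hz, hphase]

theorem exists_eq_mul_phaseDiagonal_mul_of_mul_transpose_eq {U : Matrix n n ℂ}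
    (hU : U ∈ unitaryGroup n ℂ) {O : Matrix n n ℝ} (hO : O ∈ orthogonalGroup n ℝ) {θ : n → ℝ}
    (h : U * Uᵀ = O.map ofReal * phaseDiagonal θ * phaseDiagonal θ * Oᵀ.map ofReal) :
    ∃ Q ∈ orthogonalGroup n ℝ, U = O.map ofReal * phaseDiagonal θ * Q.map ofReal := by
  set D := phaseDiagonal θ
  set W := phaseDiagonal (-θ) * Oᵀ.map ofReal * U
  have hDD : D * phaseDiagonal (-θ) = 1 := phaseDiagonal_mul_phaseDiagonal_neg θ
  have hUW : U = O.map ofReal * D * W := by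
    calc U = O.map ofReal * (D * phaseDiagonal (-θ)) * Oᵀ.map ofReal * U := by
          rw [hDD, Matrix.mul_one, map_ofReal_mul_map_ofReal_transpose hO, Matrix.one_mul]
      _ = O.map ofReal * D * W := by simp only [W, Matrix.mul_assoc]
  have hW : W ∈ unitaryGroup n ℂ := mul_mem (mul_mem (phaseDiagonal_mem_unitaryGroup _)
    (map_ofReal_mem_unitaryGroup_iff.2 (transpose_mem_unitaryGroup_iff.2 hO))) hU
  have hWreal : Wᴴ = Wᵀ := by
    have hUt : Uᵀ = Uᴴ * (U * Uᵀ) := by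
      rw [← Matrix.mul_assoc, ← star_eq_conjTranspose, mem_unitaryGroup_iff'.1 hU, Matrix.one_mul]
    calc Wᴴ = Uᴴ * O.map ofReal * D := by
          simp only [W, D, conjTranspose_mul, conjTranspose_phaseDiagonal, neg_neg,
            conjTranspose_map_ofReal, transpose_transpose, Matrix.mul_assoc]
      _ = Uᴴ * O.map ofReal * D * (D * (Oᵀ.map ofReal * O.map ofReal) * phaseDiagonal (-θ)) := by
          rw [map_ofReal_transpose_mul_map_ofReal hO, Matrix.mul_one, hDD, Matrix.mul_one]
      _ = Uᴴ * (O.map ofReal * D * D * Oᵀ.map ofReal) * O.map ofReal * phaseDiagonal (-θ) := by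
          simp only [Matrix.mul_assoc]
      _ = Wᵀ := by
          rw [← h, ← hUt]
          simp only [W, transpose_mul, transpose_phaseDiagonal, transpose_map, transpose_transpose,
            Matrix.mul_assoc]
  refine ⟨W.map re, map_ofReal_mem_unitaryGroup_iff.1 ?_, ?_⟩ <;>
    rwa [map_re_map_ofReal_of_conjTranspose_eq_transpose hWreal]

end Unitary

end Matrix

theorem re_im_simultaneous_svd (n : ℕ) (U : Matrix (Fin n) (Fin n) ℂ)
    (hU : Uᴴ * U = 1) :
    ∃ (O₁ O₂ : Matrix (Fin n) (Fin n) ℝ) (θ : Fin n → ℝ),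
      O₁ᵀ * O₁ = 1 ∧ O₂ᵀ * O₂ = 1 ∧
      U.map Complex.re = O₁ * Matrix.diagonal (fun l => Real.cos (θ l)) * O₂ ∧
      U.map Complex.im = O₁ * Matrix.diagonal (fun l => Real.sin (θ l)) * O₂ := by
  have hU' : U ∈ unitaryGroup (Fin n) ℂ := mem_unitaryGroup_iff'.2 hU
  obtain ⟨O₁, hO₁, φ, hS⟩ := exists_orthogonal_phaseDiagonal_of_transpose_eq
    (mul_mem hU' (transpose_mem_unitaryGroup_iff.2 hU'))
    (by rw [transpose_mul, transpose_transpose])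
  rw [← phaseDiagonal_half_mul_self, ← Matrix.mul_assoc] at hS
  obtain ⟨O₂, hO₂, rfl⟩ := exists_eq_mul_phaseDiagonal_mul_of_mul_transpose_eq hU' hO₁ hS
  refine ⟨O₁, O₂, φ / 2, (mem_orthogonalGroup_iff' _ ℝ).1 hO₁,
    (mem_orthogonalGroup_iff' _ ℝ).1 hO₂, ?_, ?_⟩ <;>
  simp only [mul_map_re, mul_map_im, map_ofReal_re, map_ofReal_im, phaseDiagonal_map_re,
    phaseDiagonal_map_im, Matrix.mul_zero, Matrix.zero_mul, sub_zero, add_zero, zero_add]
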